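/- Let p ≥ 1 be a natural number. In the ℝ-vector space of polynomial vector fields Fin 3 → MvPolynomial (Fin 3) ℝ, consider the first-kind Nédélec shape-function space NED¹_p := {q : each component of q has total degree ≤ p−1} + S_p, where S_p := {q : each component of q has total degree ≤ p and x₁·q₁ + x₂·q₂ + x₃·q₃ = 0}. Then dim_ℝ NED¹_p = p·(p+2)·(p+3)/2. -/

import Mathlib

open MvPolynomial

/-- Vector fields with polynomial components of total degree at most `k`,
as a subspace of `Fin 3 → MvPolynomial (Fin 3) ℝ`. -/
noncomputable def polyVec (k : ℕ) : Submodule ℝ (Fin 3 → MvPolynomial (Fin 3) ℝ) :=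
  Submodule.pi Set.univ (fun _ => restrictTotalDegree (Fin 3) ℝ k)

/-- The linear map `q ↦ x₁·q₁ + x₂·q₂ + x₃·q₃`. -/
noncomputable def dotWithX :
    (Fin 3 → MvPolynomial (Fin 3) ℝ) →ₗ[ℝ] MvPolynomial (Fin 3) ℝ :=
  ∑ i : Fin 3, (LinearMap.mulLeft ℝ (X i)).comp (LinearMap.proj i)

/-- The subspace `S_p = {q ∈ (P_p)³ : q · x = 0}`. -/
noncomputable def SSpace (p : ℕ) : Submodule ℝ (Fin 3 → MvPolynomial (Fin 3) ℝ) :=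
  polyVec p ⊓ LinearMap.ker dotWithX

/-- The first-kind Nédélec shape-function space `NED¹_p = (P_{p−1})³ + S_p`. -/
noncomputable def NedOneSpace (p : ℕ) : Submodule ℝ (Fin 3 → MvPolynomial (Fin 3) ℝ) :=
  polyVec (p - 1) ⊔ SSpace p

/-!
`q ↦ x · q` maps `(P_k)³` onto the polynomials of degree `≤ k + 1` without constant term, since
every non-constant monomial is `xᵢ` times a monomial of one degree less. Rank–nullity then gives
`dim S_k = 3·C(k+3,3) − C(k+4,3) + 1`. Since `(P_{p−1})³ ∩ S_p = S_{p−1}`, the dimension of the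
sum is `3·C(p+2,3) + dim S_p − dim S_{p−1} = 4·C(p+3,3) − C(p+4,3) = p(p+2)(p+3)/2`.
-/

/-- The extra variable `none` absorbs the missing degree. -/
def sumLeEquivOptionSumEq (σ : Type*) [Fintype σ] (k : ℕ) :
    {s : σ → ℕ // ∑ i, s i ≤ k} ≃ {t : Option σ → ℕ // ∑ i, t i = k} where
  toFun s := ⟨fun i => i.elim (k - ∑ i, s.1 i) s.1, by
    have := s.2
    rw [Fintype.sum_option]
    simp only [Option.elim_none, Option.elim_some]
    omega⟩
  invFun t := ⟨fun i => t.1 (some i), by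
    have := t.2
    rw [Fintype.sum_option] at this
    exact le_of_le_of_eq (Nat.le_add_left _ _) this⟩
  left_inv s := rfl
  right_inv t := by
    ext (_ | i)
    · have := t.2
      rw [Fintype.sum_option] at this
      simp only [Option.elim_none]
      omega
    · rfl

theorem Finsupp.natCard_degree_le (σ : Type*) [Fintype σ] (k : ℕ) :
    Nat.card {s : σ →₀ ℕ // s.degree ≤ k} = (k + Fintype.card σ).choose (Fintype.card σ) := by
  classical
  rw [Nat.card_congr ((Finsupp.equivFunOnFinite.subtypeEquiv fun s => by
      rw [Finsupp.degree_eq_sum]; rfl).trans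
      ((sumLeEquivOptionSumEq σ k).trans (Sym.equivNatSumOfFintype (Option σ) k).symm)),
    Sym.natCard_sym_eq_choose, Nat.card_eq_fintype_card, Fintype.card_option,
    add_right_comm, Nat.add_sub_cancel, add_comm k, Nat.choose_symm_add]

theorem MvPolynomial.finrank_restrictTotalDegree (σ R : Type*) [Fintype σ] [CommRing R]
    [Nontrivial R] (k : ℕ) :
    Module.finrank R (restrictTotalDegree σ R k) =
      (k + Fintype.card σ).choose (Fintype.card σ) := by
  have b : Module.Basis {s : σ →₀ ℕ // s.degree ≤ k} R (restrictTotalDegree σ R k) :=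
    basisRestrictSupport R _
  rw [Module.finrank_eq_nat_card_basis b]
  exact Finsupp.natCard_degree_le σ k

theorem MvPolynomial.X_mul_mem_restrictTotalDegree {σ R : Type*} [CommSemiring R] {k : ℕ}
    (i : σ) {f : MvPolynomial σ R} (hf : f ∈ restrictTotalDegree σ R k) :
    X i * f ∈ restrictTotalDegree σ R (k + 1) := by
  rw [mem_restrictTotalDegree] at hf ⊢
  have hX : (X i : MvPolynomial σ R).totalDegree ≤ 1 :=
    (totalDegree_monomial_le _ _).trans (by simp)
  exact (totalDegree_mul _ _).trans (by omega)

theorem Submodule.pi_univ_const_eq_range_compLeft {R M : Type*} [Semiring R] [AddCommMonoid M]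
    [Module R M] (p : Submodule R M) (ι : Type*) :
    Submodule.pi Set.univ (fun _ : ι => p) = LinearMap.range (p.subtype.compLeft ι) := by
  rw [LinearMap.range_compLeft, Submodule.range_subtype]

theorem Submodule.finrank_pi_univ_const {K M ι : Type*} [DivisionRing K] [AddCommGroup M]
    [Module K M] [Fintype ι] (p : Submodule K M) [FiniteDimensional K p] :
    Module.finrank K (Submodule.pi Set.univ fun _ : ι => p) =
      Fintype.card ι * Module.finrank K p := by
  rw [Submodule.pi_univ_const_eq_range_compLeft,
    LinearMap.finrank_range_of_inj p.injective_subtype.comp_left, Module.finrank_pi_fintype,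
    Finset.sum_const, smul_eq_mul, Finset.card_univ]

theorem Submodule.finrank_map_add_finrank_inf_ker {K M N : Type*} [DivisionRing K]
    [AddCommGroup M] [Module K M] [AddCommGroup N] [Module K N] (p : Submodule K M)
    [FiniteDimensional K p] (f : M →ₗ[K] N) :
    Module.finrank K (p.map f) + Module.finrank K (p ⊓ LinearMap.ker f : Submodule K M) =
      Module.finrank K p := by
  have h := LinearMap.finrank_range_add_finrank_ker (f.domRestrict p)
  rwa [LinearMap.range_domRestrict, LinearMap.ker_domRestrict, ← Submodule.finrank_map_subtype_eq,
    Submodule.map_comap_subtype] at h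

theorem MvPolynomial.finrank_restrictTotalDegree_inf_ker_lcoeff_zero_add_one {σ K : Type*}
    [Field K] [Finite σ] (k : ℕ) :
    Module.finrank K (restrictTotalDegree σ K k ⊓ LinearMap.ker (lcoeff K 0) :
      Submodule K (MvPolynomial σ K)) + 1 = Module.finrank K (restrictTotalDegree σ K k) := by
  have hconst : (restrictTotalDegree σ K k).map (lcoeff K 0) = ⊤ := by
    refine Submodule.eq_top_iff'.mpr fun c => ⟨C c, ?_, by simp⟩
    simp [mem_restrictTotalDegree]
  rw [← Submodule.finrank_map_add_finrank_inf_ker (restrictTotalDegree σ K k) (lcoeff K 0),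
    hconst, finrank_top, Module.finrank_self, add_comm]

theorem four_mul_choose_three (n : ℕ) :
    4 * (n + 3).choose 3 = (n + 4).choose 3 + n * (n + 2) * (n + 3) / 2 := by
  have hpascal : (n + 4).choose 3 = (n + 3).choose 2 + (n + 3).choose 3 :=
    Nat.choose_succ_succ _ _
  have h3 : (n + 3).choose 3 * 3 = (n + 3).choose 2 * (n + 1) := Nat.choose_succ_right_eq _ _
  have h2 : (n + 3).choose 2 * 2 = (n + 3) * (n + 2) := by
    simpa using Nat.choose_succ_right_eq (n + 3) 1
  have hhalf : n * (n + 2) * (n + 3) / 2 = n * (n + 3).choose 2 := by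
    rw [show n * (n + 2) * (n + 3) = 2 * (n * (n + 3).choose 2) by
        rw [mul_assoc, mul_comm (n + 2), ← h2]; ring,
      Nat.mul_div_cancel_left _ two_pos]
  rw [hpascal, hhalf]
  linarith

instance (k : ℕ) : FiniteDimensional ℝ (polyVec k) := by
  rw [polyVec, Submodule.pi_univ_const_eq_range_compLeft]
  infer_instance

instance (k : ℕ) : FiniteDimensional ℝ (SSpace k) :=
  Submodule.finiteDimensional_of_le inf_le_left

theorem finrank_polyVec (k : ℕ) : Module.finrank ℝ (polyVec k) = 3 * (k + 3).choose 3 := by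
  rw [polyVec, Submodule.finrank_pi_univ_const, finrank_restrictTotalDegree, Fintype.card_fin]

theorem polyVec_mono {k l : ℕ} (h : k ≤ l) : polyVec k ≤ polyVec l :=
  Submodule.pi_mono fun _ _ => restrictSupport_mono ℝ fun _ hs => le_trans hs h

theorem dotWithX_apply (q : Fin 3 → MvPolynomial (Fin 3) ℝ) :
    dotWithX q = ∑ i, X i * q i := by
  simp [dotWithX]

theorem monomial_mem_map_dotWithX_polyVec {k : ℕ} {v : Fin 3 →₀ ℕ} (hv : v ≠ 0)
    (hdeg : v.degree ≤ k + 1) (c : ℝ) : monomial v c ∈ (polyVec k).map dotWithX := by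
  obtain ⟨i, hi⟩ := Finsupp.ne_iff.mp hv
  set u := v - Finsupp.single i 1
  have hv_eq : u + Finsupp.single i 1 = v := Finsupp.sub_add_single_one_cancel hi
  have hu : u.degree + 1 = v.degree := by
    rw [← hv_eq, map_add, Finsupp.degree_single]
  refine ⟨Pi.single i (monomial u c), Submodule.le_comap_single_pi _ ?_, ?_⟩
  · exact (mem_restrictTotalDegree _ _ _).mpr ((totalDegree_monomial_le u c).trans (by
      change u.degree ≤ k; omega))
  · rw [dotWithX_apply, Finset.sum_eq_single i (fun j _ hj => by simp [hj]) (by simp),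
      Pi.single_eq_same, ← pow_one (X i), ← monomial_single_add, add_comm, hv_eq]

theorem map_dotWithX_polyVec (k : ℕ) :
    (polyVec k).map dotWithX =
      restrictTotalDegree (Fin 3) ℝ (k + 1) ⊓ LinearMap.ker (lcoeff ℝ 0) := by
  apply le_antisymm
  · rintro _ ⟨q, hq, rfl⟩
    refine ⟨?_, ?_⟩
    · rw [SetLike.mem_coe, dotWithX_apply]
      exact Submodule.sum_mem _ fun i _ => X_mul_mem_restrictTotalDegree i (hq i trivial)
    · classical
      simp [dotWithX_apply, coeff_X_mul']
  · rintro f ⟨hdeg, hconst⟩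
    rw [SetLike.mem_coe, mem_restrictTotalDegree] at hdeg
    rw [f.as_sum]
    refine Submodule.sum_mem _ fun v hv => monomial_mem_map_dotWithX_polyVec ?_
      ((le_totalDegree hv).trans hdeg) _
    rintro rfl
    exact mem_support_iff.mp hv hconst

theorem finrank_SSpace_add_choose (k : ℕ) :
    Module.finrank ℝ (SSpace k) + (k + 4).choose 3 = 3 * (k + 3).choose 3 + 1 := by
  have hrank := Submodule.finrank_map_add_finrank_inf_ker (polyVec k) dotWithX
  have himage := finrank_restrictTotalDegree_inf_ker_lcoeff_zero_add_one (σ := Fin 3) (K := ℝ)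
    (k + 1)
  rw [map_dotWithX_polyVec, finrank_polyVec] at hrank
  simp only [finrank_restrictTotalDegree, Fintype.card_fin, add_assoc, Nat.reduceAdd] at himage
  rw [SSpace]
  omega

theorem polyVec_inf_SSpace_succ (k : ℕ) : polyVec k ⊓ SSpace (k + 1) = SSpace k := by
  rw [SSpace, SSpace, ← inf_assoc, inf_eq_left.mpr (polyVec_mono k.le_succ)]

theorem nedelec_first_kind_dimension (p : ℕ) (hp : 1 ≤ p) :
    Module.finrank ℝ (NedOneSpace p) = p * (p + 2) * (p + 3) / 2 := by
  obtain ⟨k, rfl⟩ : ∃ k, p = k + 1 := ⟨p - 1, by omega⟩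
  have hsum := Submodule.finrank_sup_add_finrank_inf_eq (polyVec k) (SSpace (k + 1))
  rw [polyVec_inf_SSpace_succ] at hsum
  have hS := finrank_SSpace_add_choose k
  have hS_succ := finrank_SSpace_add_choose (k + 1)
  have hP := finrank_polyVec k
  have harith := four_mul_choose_three (k + 1)
  rw [NedOneSpace, Nat.add_sub_cancel]
  simp only [add_assoc, Nat.reduceAdd] at hS_succ harith ⊢
  omega
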